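/- Lower-tail binomial bound proportional to the success probability: let ε > 0, α ∈ (0,1], p ∈ (0, 1/8], and let q be a positive integer with q ≥ 32·log(4/α)/ε². If X is a Binomial(q, p) random variable, then Pr( X/q − p ≤ −ε/4 ) ≤ (α/4) · p. -/

import Mathlib

open Finset

lemma key_ineq {x : ℝ} (hx0 : 0 < x) (hx1 : x ≤ 1) :
    (1 - x)^2 / 2 ≤ x * Real.log x - x + 1 := by
  have hder : ∀ y ∈ Set.Ioo x (1:ℝ), HasDerivAt
      (fun y : ℝ => y * Real.log y - y + 1 - (1-y)^2/2)
      (Real.log y + 1 - y) y := by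
    intro y hy
    have hy0 : y ≠ 0 := by nlinarith [hy.1]
    have h1 : HasDerivAt (fun y : ℝ => y * Real.log y)
        (1 * Real.log y + y * y⁻¹) y := (hasDerivAt_id y).mul (Real.hasDerivAt_log hy0)
    have h2 : HasDerivAt (fun y : ℝ => (1-y)^2/2)
        ((2 * (1-y)^1 * (0 - 1))/2) y :=
      (((hasDerivAt_const y (1:ℝ)).sub (hasDerivAt_id y)).pow 2).div_const 2
    have := (((h1.sub (hasDerivAt_id y)).add_const 1).sub h2)
    convert this using 1
    · rfl
    · rfl
    · rfl
    rw [mul_inv_cancel₀ hy0]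
    ring
  have hcont : ContinuousOn (fun y : ℝ => y * Real.log y - y + 1 - (1-y)^2/2) (Set.Icc x 1) := by
    have : Set.Icc x 1 ⊆ {(0:ℝ)}ᶜ := by
      intro y hy; simp only [Set.mem_compl_iff, Set.mem_singleton_iff]
      nlinarith [hy.1]
    fun_prop (disch := assumption)
  have hanti : AntitoneOn (fun y : ℝ => y * Real.log y - y + 1 - (1-y)^2/2) (Set.Icc x 1) := by
    apply antitoneOn_of_deriv_nonpos (convex_Icc x 1) hcont
    · intro y hy
      rw [interior_Icc] at hy
      exact ((hder y hy).differentiableAt).differentiableWithinAt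
    · intro y hy
      rw [interior_Icc] at hy
      rw [(hder y hy).deriv]
      have := Real.log_le_sub_one_of_pos (show 0 < y by linarith [hy.1])
      linarith
  have := hanti (Set.left_mem_Icc.2 hx1) (Set.right_mem_Icc.2 hx1) hx1
  simp only [Real.log_one] at this
  nlinarith [this]

lemma tail_bound (ε α p : ℝ) (hε : 0 < ε) (hα0 : 0 < α) (hα1 : α ≤ 1)
    (hp0 : 0 < p) (hp1 : p ≤ 1/8)
    (q : ℕ) (hq2 : 32 * Real.log (4 / α) / ε ^ 2 ≤ q) :
    Real.exp (-((q:ℝ) * (ε^2/(32*p)))) ≤ α / 4 * p := by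
  have h1 : 32 * Real.log (4/α) ≤ (q:ℝ) * ε^2 := by
    rw [div_le_iff₀ (by positivity)] at hq2; linarith
  have hc : (0:ℝ) ≤ 1/p - 1 := by
    rw [sub_nonneg, le_div_iff₀ hp0]; linarith
  have h2 : Real.log (4/α) / p ≤ (q:ℝ) * (ε^2/(32*p)) := by
    rw [div_le_iff₀ hp0]
    have he : (q:ℝ) * (ε^2/(32*p)) * p = q*ε^2/32 := by field_simp
    rw [he]; linarith
  have step1 : Real.exp (-((q:ℝ) * (ε^2/(32*p)))) ≤ Real.exp (-(Real.log (4/α) / p)) :=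
    Real.exp_le_exp.2 (by linarith)
  have hlogeq : Real.log (α/4) = - Real.log (4/α) := by
    rw [← Real.log_inv, inv_div]
  have heq : Real.exp (-(Real.log (4/α)/p)) = (α/4) ^ (1/p : ℝ) := by
    rw [Real.rpow_def_of_pos (by positivity), hlogeq]
    ring_nf
  have hsplit : (α/4 : ℝ) ^ (1/p : ℝ) = (α/4) * (α/4) ^ ((1/p - 1) : ℝ) := by
    have h' : (1/p : ℝ) = 1 + (1/p - 1) := by ring
    rw [h', Real.rpow_add (by positivity), Real.rpow_one]
    norm_num
  have hb1 : (α/4 : ℝ) ^ ((1/p - 1) : ℝ) ≤ (1/4 : ℝ) ^ ((1/p - 1) : ℝ) :=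
    Real.rpow_le_rpow (by positivity) (by linarith) hc
  have hb2 : (1/4 : ℝ) ^ ((1/p - 1) : ℝ) ≤ p := by
    rw [Real.rpow_def_of_pos (by norm_num)]
    have hlog4 : (1:ℝ) ≤ Real.log 4 := by
      rw [Real.le_log_iff_exp_le (by norm_num)]
      exact (Real.exp_one_lt_d9).le.trans (by norm_num)
    have hlp : Real.log (1/p) ≤ 1/p - 1 := Real.log_le_sub_one_of_pos (by positivity)
    rw [Real.log_div one_ne_zero hp0.ne', Real.log_one] at hlp
    have hl14 : Real.log (1/4:ℝ) = - Real.log 4 := by rw [one_div, Real.log_inv]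
    calc Real.exp (Real.log (1/4) * (1/p-1)) ≤ Real.exp (Real.log p) := by
          apply Real.exp_le_exp.2
          rw [hl14]; nlinarith
      _ = p := Real.exp_log hp0
  calc Real.exp (-((q:ℝ) * (ε^2/(32*p)))) ≤ Real.exp (-(Real.log (4/α) / p)) := step1
    _ = (α/4) ^ (1/p : ℝ) := heq
    _ = (α/4) * (α/4) ^ ((1/p - 1) : ℝ) := hsplit
    _ ≤ (α/4) * p := by
        refine mul_le_mul_of_nonneg_left (hb1.trans hb2) (by positivity)

/-- Lower-tail binomial bound proportional to the success probability: if `X ∼ Binomial(q,p)`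
with `p ∈ (0,1/8]` and `q ≥ 32·log(4/α)/ε²`, then `Pr( X/q − p ≤ −ε/4 ) ≤ (α/4)·p`. -/
theorem binomial_lower_tail_prop_bound
    (ε α p : ℝ) (hε : 0 < ε) (hα : α ∈ Set.Ioc (0 : ℝ) 1)
    (hp : p ∈ Set.Ioc (0 : ℝ) (1 / 8))
    (q : ℕ) (hq : 0 < q) (hq2 : 32 * Real.log (4 / α) / ε ^ 2 ≤ q) :
    ∑ k ∈ (range (q + 1)).filter (fun k : ℕ => (k : ℝ) / q - p ≤ -(ε / 4)),
      (q.choose k : ℝ) * p ^ k * (1 - p) ^ (q - k) ≤ α / 4 * p := by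
  obtain ⟨hα0, hα1⟩ := hα
  obtain ⟨hp0, hp1⟩ := hp
  set a : ℝ := p - ε/4 with ha
  have hqR : (0:ℝ) < q := Nat.cast_pos.2 hq
  have hmem : ∀ k : ℕ, ((k:ℝ)/q - p ≤ -(ε/4)) ↔ (k:ℝ) ≤ q * a := by
    intro k
    rw [ha]
    constructor
    · intro h
      have h' : (k:ℝ)/q ≤ p - ε/4 := by linarith
      calc (k:ℝ) = (k:ℝ)/q * q := by field_simp
        _ ≤ (p - ε/4) * q := mul_le_mul_of_nonneg_right h' hqR.le
        _ = q * (p - ε/4) := by ring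
    · intro h
      have h' : (k:ℝ)/q ≤ p - ε/4 := by
        rw [div_le_iff₀ hqR]; linarith
      linarith
  rcases lt_trichotomy a 0 with hA | hA | hA
  · -- a < 0 : event empty
    have hempty : (range (q + 1)).filter (fun k : ℕ => (k : ℝ) / q - p ≤ -(ε / 4)) = ∅ := by
      rw [Finset.filter_eq_empty_iff]
      intro k _
      rw [hmem k]
      push_neg
      calc (q:ℝ) * a < 0 := by nlinarith
        _ ≤ k := Nat.cast_nonneg k
    rw [hempty, Finset.sum_empty]
    positivity
  · -- a = 0 : event ⊆ {0}
    have hεp : ε = 4 * p := by rw [ha] at hA; linarith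
    have hfsub : (range (q + 1)).filter (fun k : ℕ => (k : ℝ) / q - p ≤ -(ε / 4)) ⊆ {0} := by
      intro k hk
      rw [Finset.mem_filter] at hk
      have := (hmem k).1 hk.2
      rw [hA, mul_zero] at this
      simp only [Finset.mem_singleton]
      exact_mod_cast le_antisymm (by exact_mod_cast this) (Nat.zero_le k)
    have hS : ∑ k ∈ (range (q + 1)).filter (fun k : ℕ => (k : ℝ) / q - p ≤ -(ε / 4)),
        (q.choose k : ℝ) * p ^ k * (1 - p) ^ (q - k) ≤ (1 - p)^q := by
      calc _ ≤ ∑ k ∈ ({0} : Finset ℕ), (q.choose k : ℝ) * p ^ k * (1 - p) ^ (q - k) :=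
            Finset.sum_le_sum_of_subset_of_nonneg hfsub (fun k _ _ => by
              have h1p : (0:ℝ) ≤ 1 - p := by linarith
              positivity)
        _ = (1 - p)^q := by simp
    have h2 : (1 - p)^q ≤ Real.exp (-((q:ℝ) * (ε^2/(32*p)))) := by
      calc (1 - p)^q ≤ Real.exp (-p) ^ q := by
            apply pow_le_pow_left₀ (by linarith)
            linarith [Real.add_one_le_exp (-p)]
        _ = Real.exp ((q:ℝ) * (-p)) := (Real.exp_nat_mul _ q).symm
        _ ≤ Real.exp (-((q:ℝ) * (ε^2/(32*p)))) := by
            apply Real.exp_le_exp.2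
            have : ε^2/(32*p) = p/2 := by rw [hεp]; field_simp; ring
            rw [this]
            nlinarith
    exact (hS.trans h2).trans (tail_bound ε α p hε hα0 hα1 hp0 hp1 q hq2)
  · -- a > 0 : Chernoff
    set s : ℝ := a / p with hs_def
    have hs0 : 0 < s := div_pos hA hp0
    have hs1 : s < 1 := (div_lt_one hp0).2 (by rw [ha]; linarith)
    have hps : p * s = a := by rw [hs_def]; field_simp
    have step12 : ∑ k ∈ (range (q + 1)).filter (fun k : ℕ => (k : ℝ) / q - p ≤ -(ε / 4)),
        (q.choose k : ℝ) * p ^ k * (1 - p) ^ (q - k)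
        ≤ ∑ k ∈ range (q + 1),
          (q.choose k : ℝ) * p ^ k * (1 - p) ^ (q - k) * s ^ ((k:ℝ) - q * a) := by
      apply le_trans (Finset.sum_le_sum (g := fun k =>
        (q.choose k : ℝ) * p ^ k * (1 - p) ^ (q - k) * s ^ ((k:ℝ) - q * a)) ?_)
      · refine Finset.sum_le_sum_of_subset_of_nonneg (Finset.filter_subset _ _)
          (fun k _ _ => ?_)
        have h1p : (0:ℝ) ≤ 1 - p := by linarith
        positivity
      · intro k hk
        have hk' : (k:ℝ) ≤ q * a := (hmem k).1 (Finset.mem_filter.1 hk).2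
        have h1 : 1 ≤ s ^ ((k:ℝ) - q * a) :=
          Real.one_le_rpow_of_pos_of_le_one_of_nonpos hs0 hs1.le (by linarith)
        calc (q.choose k : ℝ) * p ^ k * (1 - p) ^ (q - k)
            = (q.choose k : ℝ) * p ^ k * (1 - p) ^ (q - k) * 1 := (mul_one _).symm
          _ ≤ _ := mul_le_mul_of_nonneg_left h1 (by
              have h1p : (0:ℝ) ≤ 1 - p := by linarith
              positivity)
    have step3 : ∑ k ∈ range (q + 1),
        (q.choose k : ℝ) * p ^ k * (1 - p) ^ (q - k) * s ^ ((k:ℝ) - q * a)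
        = s ^ (-((q:ℝ) * a)) * (1 - ε/4)^q := by
      have hterm : ∀ k ∈ range (q + 1),
          (q.choose k : ℝ) * p ^ k * (1 - p) ^ (q - k) * s ^ ((k:ℝ) - q * a)
          = s ^ (-((q:ℝ) * a)) * ((p * s) ^ k * (1 - p) ^ (q - k) * (q.choose k : ℝ)) := by
        intro k _
        rw [show ((k:ℝ) - q * a) = (k:ℝ) + -((q:ℝ) * a) by ring, Real.rpow_add hs0,
          Real.rpow_natCast, mul_pow]
        ring
      rw [Finset.sum_congr rfl hterm, ← Finset.mul_sum, ← add_pow]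
      congr 2
      rw [hps, ha]; ring
    have step4 : s ^ (-((q:ℝ) * a)) * (1 - ε/4)^q
        ≤ Real.exp (-((q:ℝ) * (a * Real.log s + ε/4))) := by
      have e1 : s ^ (-((q:ℝ) * a)) = Real.exp (Real.log s * -((q:ℝ) * a)) :=
        Real.rpow_def_of_pos hs0 _
      have hε4 : ε/4 < p := by rw [ha] at hA; linarith
      have e2 : (1 - ε/4)^q ≤ Real.exp ((q:ℝ) * (-(ε/4))) := by
        rw [Real.exp_nat_mul]
        apply pow_le_pow_left₀ (by linarith)
        linarith [Real.add_one_le_exp (-(ε/4))]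
      calc s ^ (-((q:ℝ) * a)) * (1 - ε/4)^q
          ≤ Real.exp (Real.log s * -((q:ℝ) * a)) * Real.exp ((q:ℝ) * (-(ε/4))) := by
            rw [e1]
            exact mul_le_mul_of_nonneg_left e2 (Real.exp_pos _).le
        _ = Real.exp (-((q:ℝ) * (a * Real.log s + ε/4))) := by
            rw [← Real.exp_add]; ring_nf
    have step5 : Real.exp (-((q:ℝ) * (a * Real.log s + ε/4)))
        ≤ Real.exp (-((q:ℝ) * (ε^2/(32*p)))) := by
      apply Real.exp_le_exp.2
      have hk := key_ineq hs0 hs1.le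
      have h1s : 1 - s = ε/(4*p) := by
        rw [hs_def, ha]; field_simp; ring
      have e3 : p * ((1 - s)^2/2) = ε^2/(32*p) := by
        rw [h1s]; field_simp; ring
      have e4 : p * (s * Real.log s - s + 1) = a * Real.log s + ε/4 := by
        rw [hs_def]; field_simp; ring
      have := mul_le_mul_of_nonneg_left hk hp0.le
      rw [e3, e4] at this
      have hq0 : (0:ℝ) ≤ q := hqR.le
      nlinarith
    calc ∑ k ∈ (range (q + 1)).filter (fun k : ℕ => (k : ℝ) / q - p ≤ -(ε / 4)),
          (q.choose k : ℝ) * p ^ k * (1 - p) ^ (q - k)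
        ≤ s ^ (-((q:ℝ) * a)) * (1 - ε/4)^q := by rw [← step3]; exact step12
      _ ≤ Real.exp (-((q:ℝ) * (a * Real.log s + ε/4))) := step4
      _ ≤ Real.exp (-((q:ℝ) * (ε^2/(32*p)))) := step5
      _ ≤ α / 4 * p := tail_bound ε α p hε hα0 hα1 hp0 hp1 q hq2
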